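/- arXiv:2502.03920 — 3 statements merged into one kernel-verified Lean document; each statement's English description precedes it below -/
import Mathlib

section
/- Let (Ω, F, μ) be a probability space and d ∈ ℕ. Let (D_l)_{l∈ℕ} be a sequence of integrable random vectors D_l : Ω → ℝ^d and (a_l)_{l∈ℕ} a sequence in ℝ^d with the convention a_{-1} := 0, such that ∫_Ω D_l dμ = a_l − a_{l−1} for every l ∈ ℕ, a_l → a⋆ as l → ∞, and ∑_{l∈ℕ} ∫_Ω ‖D_l‖ dμ < ∞. Let P_L : ℕ → ℝ be a probability mass function with P_L(l) > 0 for all l. Then, on the product probability space ℕ × Ω where ℕ carries the discrete probability measure with mass P_L(l) at l and Ω carries μ, the function (l, ω) ↦ (1/P_L(l)) · D_l(ω) is integrable and its integral equals a⋆. In other words, randomizing the level l according to P_L and returning the increment estimator D_l / P_L(l) gives an unbiased estimator of the limit a⋆. -/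
open MeasureTheory Filter
open scoped ENNReal

/-!
Since `(∑ₗ wₗ • δₗ) ⊗ μ = ∑ₗ wₗ • (μ ∘ (l, ·)⁻¹)`, integrating `(l, ω) ↦ P_L(l)⁻¹ • D_l(ω)`
against it gives `∑ₗ E[D_l] = ∑ₗ (a_l - a_{l-1})`, a telescoping series whose partial sums are
the `a_n` and hence converge to `a⋆`. Summability of `E‖D_l‖` provides both the integrability on
the product space and the unconditional convergence of this series.
-/

namespace MeasureTheory

variable {ι Ω E : Type*} [MeasurableSpace ι] [MeasurableSpace Ω]
  {μ : Measure Ω} [SFinite μ] [NormedAddCommGroup E]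
  {c : ι → ℝ≥0∞} {f : ι × Ω → E}

lemma Measure.sum_smul_dirac_prod :
    (Measure.sum fun i => c i • Measure.dirac i).prod μ
      = Measure.sum fun i => c i • μ.map (Prod.mk i) := by
  simp_rw [Measure.prod_sum_left, Measure.prod_smul_left, Measure.dirac_prod]

lemma integrable_sum_smul_dirac_prod [Countable ι] [MeasurableSingletonClass ι]
    (hc : ∀ i, c i ≠ ∞) (hf : ∀ i, Integrable (fun ω => f (i, ω)) μ)
    (hs : Summable fun i => (c i).toReal * ∫ ω, ‖f (i, ω)‖ ∂μ) :
    Integrable f ((Measure.sum fun i => c i • Measure.dirac i).prod μ) := by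
  rw [Measure.sum_smul_dirac_prod]
  refine integrable_sum_measure (fun i => ?_) ?_
  · exact ((measurableEmbedding_prodMk_left i).integrable_map_iff.2 (hf i)).smul_measure (hc i)
  · simpa only [integral_smul_measure, (measurableEmbedding_prodMk_left _).integral_map,
      smul_eq_mul] using hs

lemma integral_sum_smul_dirac_prod [MeasurableSingletonClass ι] [NormedSpace ℝ E]
    (hf : Integrable f ((Measure.sum fun i => c i • Measure.dirac i).prod μ)) :
    ∫ x, f x ∂(Measure.sum fun i => c i • Measure.dirac i).prod μ
      = ∑' i, (c i).toReal • ∫ ω, f (i, ω) ∂μ := by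
  rw [Measure.sum_smul_dirac_prod] at hf ⊢
  simp only [integral_sum_measure hf, integral_smul_measure,
    (measurableEmbedding_prodMk_left _).integral_map]

end MeasureTheory

section Telescoping

variable {E : Type*} [SeminormedAddCommGroup E]

lemma sum_range_succ_sub_prev (a : ℕ → E) (n : ℕ) :
    ∑ l ∈ Finset.range (n + 1), (a l - if l = 0 then 0 else a (l - 1)) = a n := by
  induction n with
  | zero => simp
  | succ n ih => rw [Finset.sum_range_succ, ih]; simp

lemma hasSum_sub_prev_of_tendsto {a : ℕ → E} {astar : E} (ha : Tendsto a atTop (nhds astar))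
    (hs : Summable fun l => ‖a l - if l = 0 then 0 else a (l - 1)‖) :
    HasSum (fun l => a l - if l = 0 then 0 else a (l - 1)) astar := by
  refine (hasSum_iff_tendsto_nat_of_summable_norm hs).2 ((tendsto_add_atTop_iff_nat 1).1 ?_)
  simpa only [sum_range_succ_sub_prev] using ha

end Telescoping

theorem unbiased_single_term_randomization_general
    {Ω : Type*} [MeasurableSpace Ω] (μ : Measure Ω) [IsProbabilityMeasure μ]
    (d : ℕ) (D : ℕ → Ω → EuclideanSpace ℝ (Fin d))
    (a : ℕ → EuclideanSpace ℝ (Fin d)) (astar : EuclideanSpace ℝ (Fin d))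
    (hint : ∀ l, Integrable (D l) μ)
    (hmean : ∀ l, (∫ ω, D l ω ∂μ) = a l - (if l = 0 then 0 else a (l - 1)))
    (hconv : Tendsto a atTop (nhds astar))
    (hsum : Summable fun l => ∫ ω, ‖D l ω‖ ∂μ)
    (PL : ℕ → ℝ) (hPLpos : ∀ l, 0 < PL l) :
    Integrable (fun x : ℕ × Ω => (PL x.1)⁻¹ • D x.1 x.2)
        ((Measure.sum fun l => ENNReal.ofReal (PL l) • Measure.dirac l).prod μ) ∧
      (∫ x : ℕ × Ω, (PL x.1)⁻¹ • D x.1 x.2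
          ∂((Measure.sum fun l => ENNReal.ofReal (PL l) • Measure.dirac l).prod μ)) = astar := by
  have hweight : ∀ l, (ENNReal.ofReal (PL l)).toReal * (PL l)⁻¹ = 1 := fun l => by
    rw [ENNReal.toReal_ofReal (hPLpos l).le, mul_inv_cancel₀ (hPLpos l).ne']
  have hnorm : ∀ l, (ENNReal.ofReal (PL l)).toReal * ∫ ω, ‖(PL l)⁻¹ • D l ω‖ ∂μ
      = ∫ ω, ‖D l ω‖ ∂μ := fun l => by
    simp_rw [norm_smul, integral_const_mul, ← mul_assoc,
      Real.norm_of_nonneg (inv_pos.2 (hPLpos l)).le, hweight, one_mul]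
  have hmeans : ∀ l, (ENNReal.ofReal (PL l)).toReal • ∫ ω, (PL l)⁻¹ • D l ω ∂μ
      = a l - (if l = 0 then 0 else a (l - 1)) := fun l => by
    rw [integral_smul, smul_smul, hweight, one_smul, hmean]
  have hintegrable : Integrable (fun x : ℕ × Ω => (PL x.1)⁻¹ • D x.1 x.2)
      ((Measure.sum fun l => ENNReal.ofReal (PL l) • Measure.dirac l).prod μ) :=
    integrable_sum_smul_dirac_prod (fun _ => ENNReal.ofReal_ne_top)
      (fun l => (hint l).smul (PL l)⁻¹) (by simpa only [hnorm] using hsum)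
  refine ⟨hintegrable, ?_⟩
  rw [integral_sum_smul_dirac_prod hintegrable]
  simp_rw [hmeans]
  have hincrements : Summable fun l => ‖a l - if l = 0 then 0 else a (l - 1)‖ :=
    hsum.of_nonneg_of_le (fun _ => norm_nonneg _) fun l =>
      hmean l ▸ norm_integral_le_integral_norm _
  exact (hasSum_sub_prev_of_tendsto hconv hincrements).tsum_eq

/-- Single-term randomization (debiasing) scheme: drawing a level `l` from the positive
probability mass function `PL` and returning `D l / PL l`, where `D l` is an unbiased
estimator of the increment `a l - a (l-1)` (with `a_{-1} := 0`), yields an integrable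
estimator on the product space whose expectation is the limit `astar` of the `a l`. -/
theorem unbiased_single_term_randomization
    {Ω : Type*} [MeasurableSpace Ω] (μ : Measure Ω) [IsProbabilityMeasure μ]
    (d : ℕ) (D : ℕ → Ω → EuclideanSpace ℝ (Fin d))
    (a : ℕ → EuclideanSpace ℝ (Fin d)) (astar : EuclideanSpace ℝ (Fin d))
    (hint : ∀ l, Integrable (D l) μ)
    (hmean : ∀ l, (∫ ω, D l ω ∂μ) = a l - (if l = 0 then 0 else a (l - 1)))
    (hconv : Tendsto a atTop (nhds astar))
    (hsum : Summable fun l => ∫ ω, ‖D l ω‖ ∂μ)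
    (PL : ℕ → ℝ) (hPLpos : ∀ l, 0 < PL l) (hPL : ∑' l, PL l = 1) :
    Integrable (fun x : ℕ × Ω => (PL x.1)⁻¹ • D x.1 x.2)
        ((Measure.sum fun l => ENNReal.ofReal (PL l) • Measure.dirac l).prod μ) ∧
      (∫ x : ℕ × Ω, (PL x.1)⁻¹ • D x.1 x.2
          ∂((Measure.sum fun l => ENNReal.ofReal (PL l) • Measure.dirac l).prod μ)) = astar :=
  unbiased_single_term_randomization_general μ d D a astar hint hmean hconv hsum PL hPLpos
end

section
/- Let (Ω, F, μ) be a probability space, d ∈ ℕ, and c : ℕ → ℕ → ℝ^d a doubly indexed family with the convention c_{−1,p} = c_{l,−1} = c_{−1,−1} = 0; define Δ_{l,p} := c_{l,p} − c_{l,p−1} − c_{l−1,p} + c_{l−1,p−1}. Let (D_{l,p})_{(l,p)∈ℕ²} be integrable random vectors D_{l,p} : Ω → ℝ^d with ∫_Ω D_{l,p} dμ = Δ_{l,p} for all (l,p), and let P_L, P_P : ℕ → ℝ be probability mass functions that are strictly positive everywhere. Assume: (i) ∑_{(l,p)∈ℕ²} ∫_Ω ‖D_{l,p}‖ dμ < ∞;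 (ii) for each l the limit β_l := lim_{p→∞} c_{l,p} exists; (iii) β_l → β⋆ as l → ∞. Then, on the product probability space ℕ × ℕ × Ω where the first factor carries the discrete measure with masses P_L(l), the second carries the discrete measure with masses P_P(p), and the third carries μ, the function (l, p, ω) ↦ (1/(P_L(l) P_P(p))) · D_{l,p}(ω) is integrable and its integral equals β⋆. -/
/-!
Importance weighting: for strictly positive weights `w`, integrating `(w n)⁻¹ • g n a` against
`(∑ₙ w n • δₙ) ⊗ ν` undoes the weights and returns `∑ₙ ∫ g n ∂ν`, provided `∑ₙ ∫ ‖g n‖ ∂ν < ∞`.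
Applied first in `p` and then in `l`, this turns the expectation of the estimator into the
iterated series `∑' l, ∑' p, Δ (l, p)`. With the conventions `c (-1) p = c l (-1) = 0`, the inner
series telescopes to `β l - β (l - 1)` and the outer one to `βstar`.
-/

open MeasureTheory Filter ENNReal Topology

section ImportanceWeighting

variable {α E : Type*} [MeasurableSpace α] [NormedAddCommGroup E] [NormedSpace ℝ E]
  (ν : Measure α) {w : ℕ → ℝ} {g : ℕ → α → E}

theorem MeasureTheory.Measure.sum_smul_dirac_prod_s2 [SFinite ν] (c : ℕ → ℝ≥0∞) :
    (Measure.sum fun n => c n • Measure.dirac n).prod ν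
      = Measure.sum fun n => c n • ν.map (Prod.mk n) := by
  simp only [Measure.prod_sum_left, Measure.prod_smul_left, Measure.dirac_prod]

theorem integral_smul_map_prodMk (c : ℝ≥0∞) (n : ℕ) (f : ℕ × α → E) :
    ∫ x, f x ∂(c • ν.map (Prod.mk n)) = c.toReal • ∫ a, f (n, a) ∂ν := by
  rw [integral_smul_measure, (measurableEmbedding_prodMk_left n).integral_map]

omit [NormedSpace ℝ E] in
theorem integrable_sum_dirac_prod [SFinite ν] (hw : ∀ n, 0 ≤ w n) (hg : ∀ n, Integrable (g n) ν)
    (hs : Summable fun n => w n * ∫ a, ‖g n a‖ ∂ν) :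
    Integrable (fun x : ℕ × α => g x.1 x.2)
      ((Measure.sum fun n => ENNReal.ofReal (w n) • Measure.dirac n).prod ν) := by
  rw [Measure.sum_smul_dirac_prod_s2]
  refine integrable_sum_measure (fun n => ?_) (hs.congr fun n => ?_)
  · exact (((measurableEmbedding_prodMk_left n).integrable_map_iff
      (g := fun x : ℕ × α => g x.1 x.2)).2 (hg n)).smul_measure ofReal_ne_top
  · rw [integral_smul_map_prodMk, toReal_ofReal (hw n), smul_eq_mul]

theorem integral_sum_dirac_prod [SFinite ν] (hw : ∀ n, 0 ≤ w n) (hg : ∀ n, Integrable (g n) ν)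
    (hs : Summable fun n => w n * ∫ a, ‖g n a‖ ∂ν) :
    ∫ x : ℕ × α, g x.1 x.2 ∂((Measure.sum fun n => ENNReal.ofReal (w n) • Measure.dirac n).prod ν)
      = ∑' n, w n • ∫ a, g n a ∂ν := by
  have hint := integrable_sum_dirac_prod ν hw hg hs
  rw [Measure.sum_smul_dirac_prod_s2] at hint ⊢
  rw [integral_sum_measure hint]
  exact tsum_congr fun n => by rw [integral_smul_map_prodMk, toReal_ofReal (hw n)]

theorem integral_norm_inv_smul {r : ℝ} (hr : 0 < r) (f : α → E) :
    ∫ a, ‖r⁻¹ • f a‖ ∂ν = r⁻¹ * ∫ a, ‖f a‖ ∂ν := by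
  simp only [norm_smul, Real.norm_eq_abs, abs_inv, abs_of_pos hr, integral_const_mul]

theorem summable_mul_integral_norm_inv_smul (hw : ∀ n, 0 < w n)
    (hs : Summable fun n => ∫ a, ‖g n a‖ ∂ν) :
    Summable fun n => w n * ∫ a, ‖(w n)⁻¹ • g n a‖ ∂ν :=
  hs.congr fun n => by rw [integral_norm_inv_smul ν (hw n), mul_inv_cancel_left₀ (hw n).ne']

theorem integrable_inv_smul_sum_dirac_prod [SFinite ν] (hw : ∀ n, 0 < w n)
    (hg : ∀ n, Integrable (g n) ν) (hs : Summable fun n => ∫ a, ‖g n a‖ ∂ν) :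
    Integrable (fun x : ℕ × α => (w x.1)⁻¹ • g x.1 x.2)
      ((Measure.sum fun n => ENNReal.ofReal (w n) • Measure.dirac n).prod ν) :=
  integrable_sum_dirac_prod ν (g := fun n a => (w n)⁻¹ • g n a) (fun n => (hw n).le)
    (fun n => (hg n).smul _) (summable_mul_integral_norm_inv_smul ν hw hs)

theorem integral_inv_smul_sum_dirac_prod [SFinite ν] (hw : ∀ n, 0 < w n)
    (hg : ∀ n, Integrable (g n) ν) (hs : Summable fun n => ∫ a, ‖g n a‖ ∂ν) :
    ∫ x : ℕ × α, (w x.1)⁻¹ • g x.1 x.2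
        ∂((Measure.sum fun n => ENNReal.ofReal (w n) • Measure.dirac n).prod ν)
      = ∑' n, ∫ a, g n a ∂ν := by
  rw [integral_sum_dirac_prod ν (g := fun n a => (w n)⁻¹ • g n a) (fun n => (hw n).le)
    (fun n => (hg n).smul _) (summable_mul_integral_norm_inv_smul ν hw hs)]
  exact tsum_congr fun n => by rw [integral_smul, smul_inv_smul₀ (hw n).ne']

theorem integral_norm_inv_smul_sum_dirac_prod [SFinite ν] (hw : ∀ n, 0 < w n)
    (hg : ∀ n, Integrable (g n) ν) (hs : Summable fun n => ∫ a, ‖g n a‖ ∂ν) :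
    ∫ x : ℕ × α, ‖(w x.1)⁻¹ • g x.1 x.2‖
        ∂((Measure.sum fun n => ENNReal.ofReal (w n) • Measure.dirac n).prod ν)
      = ∑' n, ∫ a, ‖g n a‖ ∂ν := by
  simp only [norm_smul, Real.norm_eq_abs, abs_inv, abs_of_pos (hw _)]
  exact integral_inv_smul_sum_dirac_prod ν hw (fun n => (hg n).norm) (by simpa using hs)

end ImportanceWeighting

section Telescoping

variable {E : Type*} [NormedAddCommGroup E]

theorem sum_range_succ_sub_ite (f : ℕ → E) (N : ℕ) :
    ∑ n ∈ Finset.range (N + 1), (f n - if n = 0 then 0 else f (n - 1)) = f N := by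
  induction N with
  | zero => simp
  | succ N ih => rw [Finset.sum_range_succ, ih]; simp

theorem tsum_sub_ite_eq_of_tendsto {f : ℕ → E} {L : E}
    (hs : Summable fun n => f n - if n = 0 then 0 else f (n - 1))
    (hf : Tendsto f atTop (𝓝 L)) :
    ∑' n, (f n - if n = 0 then 0 else f (n - 1)) = L :=
  tendsto_nhds_unique
    ((hs.hasSum.tendsto_sum_nat.comp (tendsto_add_atTop_nat 1)).congr
      (sum_range_succ_sub_ite f)) hf

theorem tsum_tsum_eq_of_tendsto_of_tendsto [CompleteSpace E] {c : ℕ → ℕ → E} {Δ : ℕ × ℕ → E}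
    (hΔ : ∀ l p, Δ (l, p) =
      c l p - (if p = 0 then 0 else c l (p - 1)) - (if l = 0 then 0 else c (l - 1) p)
        + (if l = 0 ∨ p = 0 then 0 else c (l - 1) (p - 1)))
    (hs : Summable Δ) {β : ℕ → E} (hβ : ∀ l, Tendsto (c l) atTop (𝓝 (β l)))
    {βstar : E} (hβstar : Tendsto β atTop (𝓝 βstar)) :
    ∑' l, ∑' p, Δ (l, p) = βstar := by
  set row : ℕ → ℕ → E := fun l p => c l p - if l = 0 then 0 else c (l - 1) p
  have hΔrow : ∀ l p, Δ (l, p) = row l p - if p = 0 then 0 else row l (p - 1) := by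
    intro l p
    rw [hΔ]
    by_cases hl : l = 0 <;> by_cases hp : p = 0 <;> simp [row, hl, hp]
    abel
  have hrow : ∀ l, ∑' p, Δ (l, p) = β l - if l = 0 then 0 else β (l - 1) := by
    intro l
    simp only [hΔrow l]
    refine tsum_sub_ite_eq_of_tendsto ?_ ((hβ l).sub ?_)
    · simpa only [hΔrow l] using hs.prod_factor l
    · by_cases hl : l = 0 <;> simp [hl, hβ]
  rw [tsum_congr hrow]
  exact tsum_sub_ite_eq_of_tendsto (hs.prod.congr hrow) hβstar

end Telescoping

theorem unbiased_double_randomization_general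
    {Ω : Type*} [MeasurableSpace Ω] (μ : Measure Ω) [IsProbabilityMeasure μ]
    (d : ℕ) (c : ℕ → ℕ → EuclideanSpace ℝ (Fin d)) (Δ : ℕ × ℕ → EuclideanSpace ℝ (Fin d))
    (hΔ : ∀ l p, Δ (l, p) =
      c l p - (if p = 0 then 0 else c l (p - 1)) - (if l = 0 then 0 else c (l - 1) p)
        + (if l = 0 ∨ p = 0 then 0 else c (l - 1) (p - 1)))
    (D : ℕ → ℕ → Ω → EuclideanSpace ℝ (Fin d))
    (hint : ∀ l p, Integrable (D l p) μ)
    (hmean : ∀ l p, (∫ ω, D l p ω ∂μ) = Δ (l, p))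
    (PL PP : ℕ → ℝ) (hPLpos : ∀ l, 0 < PL l) (hPPpos : ∀ p, 0 < PP p)
    (habs : Summable fun lp : ℕ × ℕ => ∫ ω, ‖D lp.1 lp.2 ω‖ ∂μ)
    (β : ℕ → EuclideanSpace ℝ (Fin d))
    (hβ : ∀ l, Tendsto (fun p => c l p) atTop (nhds (β l)))
    (βstar : EuclideanSpace ℝ (Fin d)) (hβstar : Tendsto β atTop (nhds βstar)) :
    Integrable (fun x : ℕ × ℕ × Ω => (PL x.1 * PP x.2.1)⁻¹ • D x.1 x.2.1 x.2.2)
        ((Measure.sum fun l => ENNReal.ofReal (PL l) • Measure.dirac l).prod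
          ((Measure.sum fun p => ENNReal.ofReal (PP p) • Measure.dirac p).prod μ)) ∧
      (∫ x : ℕ × ℕ × Ω, (PL x.1 * PP x.2.1)⁻¹ • D x.1 x.2.1 x.2.2
          ∂((Measure.sum fun l => ENNReal.ofReal (PL l) • Measure.dirac l).prod
            ((Measure.sum fun p => ENNReal.ofReal (PP p) • Measure.dirac p).prod μ))) = βstar := by
  set νP := Measure.sum fun p => ENNReal.ofReal (PP p) • Measure.dirac p
  have hrow (l : ℕ) : Summable fun p => ∫ ω, ‖D l p ω‖ ∂μ := habs.prod_factor l
  have hrow_int (l : ℕ) : Integrable (fun y : ℕ × Ω => (PP y.1)⁻¹ • D l y.1 y.2) (νP.prod μ) :=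
    integrable_inv_smul_sum_dirac_prod μ hPPpos (hint l) (hrow l)
  have hrow_norm : Summable fun l => ∫ y : ℕ × Ω, ‖(PP y.1)⁻¹ • D l y.1 y.2‖ ∂(νP.prod μ) :=
    habs.prod.congr fun l =>
      (integral_norm_inv_smul_sum_dirac_prod μ hPPpos (hint l) (hrow l)).symm
  have hΔsum : Summable Δ := habs.of_norm_bounded fun lp => by
    rw [← hmean]; exact norm_integral_le_integral_norm _
  have hsplit : (fun x : ℕ × ℕ × Ω => (PL x.1 * PP x.2.1)⁻¹ • D x.1 x.2.1 x.2.2)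
      = fun x => (PL x.1)⁻¹ • (PP x.2.1)⁻¹ • D x.1 x.2.1 x.2.2 := by
    ext1 x
    rw [mul_inv, mul_smul]
  rw [hsplit, integral_inv_smul_sum_dirac_prod _ hPLpos hrow_int hrow_norm]
  refine ⟨integrable_inv_smul_sum_dirac_prod _ hPLpos hrow_int hrow_norm, ?_⟩
  rw [tsum_congr fun l => integral_inv_smul_sum_dirac_prod μ hPPpos (hint l) (hrow l)]
  simp only [hmean]
  exact tsum_tsum_eq_of_tendsto_of_tendsto hΔ hΔsum hβ hβstar

/-- Double randomization scheme (UMSA): drawing a level `l ∼ PL` and an index `p ∼ PP`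
independently, and returning `D l p / (PL l * PP p)`, where `D l p` is an unbiased
estimator of the double increment `Δ (l,p)` of the doubly indexed family `c`, gives an
integrable estimator on the product space `ℕ × ℕ × Ω` whose expectation equals the
iterated limit `βstar` of `c`. -/
theorem unbiased_double_randomization
    {Ω : Type*} [MeasurableSpace Ω] (μ : Measure Ω) [IsProbabilityMeasure μ]
    (d : ℕ) (c : ℕ → ℕ → EuclideanSpace ℝ (Fin d)) (Δ : ℕ × ℕ → EuclideanSpace ℝ (Fin d))
    (hΔ : ∀ l p, Δ (l, p) =
      c l p - (if p = 0 then 0 else c l (p - 1)) - (if l = 0 then 0 else c (l - 1) p)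
        + (if l = 0 ∨ p = 0 then 0 else c (l - 1) (p - 1)))
    (D : ℕ → ℕ → Ω → EuclideanSpace ℝ (Fin d))
    (hint : ∀ l p, Integrable (D l p) μ)
    (hmean : ∀ l p, (∫ ω, D l p ω ∂μ) = Δ (l, p))
    (PL PP : ℕ → ℝ) (hPLpos : ∀ l, 0 < PL l) (hPPpos : ∀ p, 0 < PP p)
    (hPL : ∑' l, PL l = 1) (hPP : ∑' p, PP p = 1)
    (habs : Summable fun lp : ℕ × ℕ => ∫ ω, ‖D lp.1 lp.2 ω‖ ∂μ)
    (β : ℕ → EuclideanSpace ℝ (Fin d))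
    (hβ : ∀ l, Tendsto (fun p => c l p) atTop (nhds (β l)))
    (βstar : EuclideanSpace ℝ (Fin d)) (hβstar : Tendsto β atTop (nhds βstar)) :
    Integrable (fun x : ℕ × ℕ × Ω => (PL x.1 * PP x.2.1)⁻¹ • D x.1 x.2.1 x.2.2)
        ((Measure.sum fun l => ENNReal.ofReal (PL l) • Measure.dirac l).prod
          ((Measure.sum fun p => ENNReal.ofReal (PP p) • Measure.dirac p).prod μ)) ∧
      (∫ x : ℕ × ℕ × Ω, (PL x.1 * PP x.2.1)⁻¹ • D x.1 x.2.1 x.2.2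
          ∂((Measure.sum fun l => ENNReal.ofReal (PL l) • Measure.dirac l).prod
            ((Measure.sum fun p => ENNReal.ofReal (PP p) • Measure.dirac p).prod μ))) = βstar :=
  unbiased_double_randomization_general μ d c Δ hΔ D hint hmean PL PP hPLpos hPPpos habs β hβ βstar
    hβstar
end

section
/- Let d ∈ ℕ and let λ denote Lebesgue measure on ℝ^d. Let γ, γ' : ℝ^d → (0, ∞) be measurable, and let q, q' : ℝ^d × ℝ^d → (0, ∞) be measurable with ∫ q(u, w) λ(dw) = 1 and ∫ q'(u, w) λ(dw) = 1 for every u ∈ ℝ^d. Define the Metropolis–Hastings acceptance probabilities α(u, w) := min{1, γ(w) q(w, u) / (γ(u) q(u, w))} and α'(u, w) := min{1, γ'(w) q'(w, u) / (γ'(u) q'(u, w))}, and the Metropolis–Hastings kernels K(u, A) := ∫_A α(u, w) q(u, w) λ(dw) + 1_A(u) (1 − ∫_{ℝ^d} α(u, w) q(u, w) λ(dw)), with K' defined analogously from α', q'. Fix (u, u') ∈ ℝ^d × ℝ^d and let ν̌ be any probability measure on ℝ^d × ℝ^d whose first marginal has density w ↦ q(u, w) and whose second marginal has density w' ↦ q'(u',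 w') with respect to λ. Let ϒ be the uniform probability measure on [0,1] and define T : ℝ^d × ℝ^d × [0,1] → ℝ^d × ℝ^d by T(w, w', v) := ( if v < α(u, w) then w else u , if v < α'(u', w') then w' else u' ). Then the pushforward of ν̌ ⊗ ϒ under T has first marginal exactly K(u, ·) and second marginal exactly K'(u', ·). -/
open MeasureTheory

/-- Metropolis–Hastings acceptance probability for unnormalized target density `γ`
and proposal density `q`. -/
noncomputable def mhAccept {d : ℕ} (γ : (Fin d → ℝ) → ℝ)
    (q : (Fin d → ℝ) → (Fin d → ℝ) → ℝ) (u w : Fin d → ℝ) : ℝ :=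
  min 1 (γ w * q w u / (γ u * q u w))

/-- The Metropolis–Hastings kernel (as a measure, for a fixed starting point `u`):
accept a proposed move `w ∼ q(u, ·)` with probability `mhAccept γ q u w`, otherwise
stay at `u`. -/
noncomputable def mhKernel {d : ℕ} (γ : (Fin d → ℝ) → ℝ)
    (q : (Fin d → ℝ) → (Fin d → ℝ) → ℝ) (u : Fin d → ℝ) : Measure (Fin d → ℝ) :=
  volume.withDensity (fun w => ENNReal.ofReal (mhAccept γ q u w * q u w)) +
    (ENNReal.ofReal (1 - ∫ w, mhAccept γ q u w * q u w)) • Measure.dirac u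

/-! Given the proposal `w`, a uniform `v ∈ [0, 1]` satisfies `v < α(u, w)` with probability
`α(u, w)`, so the accept-or-stay map pushes `q(u, ·) ⊗ Unif[0, 1]` forward to the density
`α(u, ·) q(u, ·)` plus the rejected mass `1 - ∫ α q` at `u`, which is `K(u, ·)`. Each
coordinate of `T` depends only on its own proposal and the shared `v`, so its law is computed
from the corresponding marginal of `ν` alone. -/

open Set

lemma volume_restrict_Icc_Iio {a : ℝ} (ha : a ≤ 1) :
    volume.restrict (Icc (0 : ℝ) 1) (Iio a) = ENNReal.ofReal a := by
  have : Iio a ∩ Icc 0 1 = Ico 0 a := by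
    ext v; simp only [mem_inter_iff, mem_Iio, mem_Icc, mem_Ico]; grind
  rw [Measure.restrict_apply measurableSet_Iio, this, Real.volume_Ico, sub_zero]

lemma volume_restrict_Icc_Ici {a : ℝ} (ha : 0 ≤ a) :
    volume.restrict (Icc (0 : ℝ) 1) (Ici a) = ENNReal.ofReal (1 - a) := by
  have : Ici a ∩ Icc 0 1 = Icc a 1 := by
    ext v; simp only [mem_inter_iff, mem_Ici, mem_Icc]; grind
  rw [Measure.restrict_apply measurableSet_Ici, this, Real.volume_Icc]

noncomputable def acceptOrStay {X : Type*} (α : X → ℝ) (x₀ : X) (p : X × ℝ) : X :=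
  if p.2 < α p.1 then p.1 else x₀

section AcceptReject

variable {X : Type*} [MeasurableSpace X] {α : X → ℝ}

lemma measurableSet_lt_acceptance (hα : Measurable α) :
    MeasurableSet {p : X × ℝ | p.2 < α p.1} :=
  measurableSet_lt measurable_snd (hα.comp measurable_fst)

lemma measurable_acceptOrStay (hα : Measurable α) (x₀ : X) :
    Measurable (acceptOrStay α x₀) :=
  Measurable.ite (measurableSet_lt_acceptance hα) measurable_fst measurable_const

lemma map_fst_restrict_lt_acceptance (μ : Measure X) (hα : Measurable α)
    (hα1 : ∀ x, α x ≤ 1) :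
    ((μ.prod (volume.restrict (Icc (0 : ℝ) 1))).restrict {p | p.2 < α p.1}).map Prod.fst =
      μ.withDensity fun x => ENNReal.ofReal (α x) := by
  ext A hA
  rw [Measure.map_apply measurable_fst hA, Measure.restrict_apply (measurable_fst hA),
    Measure.prod_apply ((measurable_fst hA).inter (measurableSet_lt_acceptance hα)),
    withDensity_apply _ hA, ← lintegral_indicator hA]
  refine lintegral_congr fun x => ?_
  by_cases hx : x ∈ A
  · have : Prod.mk x ⁻¹' (Prod.fst ⁻¹' A ∩ {p : X × ℝ | p.2 < α p.1}) = Iio (α x) := by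
      ext v; simp [hx]
    rw [this, indicator_of_mem hx, volume_restrict_Icc_Iio (hα1 x)]
  · have : Prod.mk x ⁻¹' (Prod.fst ⁻¹' A ∩ {p : X × ℝ | p.2 < α p.1}) = ∅ := by
      ext v; simp [hx]
    rw [this, indicator_of_notMem hx, measure_empty]

lemma prod_uniform_compl_lt_acceptance (μ : Measure X) (hα : Measurable α)
    (hα0 : ∀ x, 0 ≤ α x) :
    μ.prod (volume.restrict (Icc (0 : ℝ) 1)) {p | p.2 < α p.1}ᶜ =
      ∫⁻ x, ENNReal.ofReal (1 - α x) ∂μ := by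
  rw [Measure.prod_apply (measurableSet_lt_acceptance hα).compl]
  refine lintegral_congr fun x => ?_
  have : Prod.mk x ⁻¹' {p : X × ℝ | p.2 < α p.1}ᶜ = Ici (α x) := by ext v; simp
  rw [this, volume_restrict_Icc_Ici (hα0 x)]

theorem map_acceptOrStay_prod_uniform (μ : Measure X) (hα : Measurable α)
    (hα0 : ∀ x, 0 ≤ α x) (hα1 : ∀ x, α x ≤ 1) (x₀ : X) :
    (μ.prod (volume.restrict (Icc (0 : ℝ) 1))).map (acceptOrStay α x₀) =
      μ.withDensity (fun x => ENNReal.ofReal (α x)) +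
        (∫⁻ x, ENNReal.ofReal (1 - α x) ∂μ) • Measure.dirac x₀ := by
  set ρ := μ.prod (volume.restrict (Icc (0 : ℝ) 1))
  set S := {p : X × ℝ | p.2 < α p.1}
  have hS : MeasurableSet S := measurableSet_lt_acceptance hα
  have haccept : (ρ.restrict S).map (acceptOrStay α x₀) = (ρ.restrict S).map Prod.fst :=
    Measure.map_congr (ae_restrict_of_forall_mem hS fun p hp => if_pos hp)
  have hstay : (ρ.restrict Sᶜ).map (acceptOrStay α x₀) = (ρ.restrict Sᶜ).map fun _ => x₀ :=
    Measure.map_congr (ae_restrict_of_forall_mem hS.compl fun p hp => if_neg hp)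
  rw [← Measure.restrict_add_restrict_compl (μ := ρ) hS,
    Measure.map_add _ _ (measurable_acceptOrStay hα x₀), haccept, hstay, Measure.map_const,
    Measure.restrict_apply_univ, map_fst_restrict_lt_acceptance μ hα hα1,
    prod_uniform_compl_lt_acceptance μ hα hα0]

end AcceptReject

lemma lintegral_ofReal_one_sub_withDensity {X : Type*} [MeasurableSpace X] {μ : Measure X}
    {f α : X → ℝ} (hf : Integrable f μ) (hf0 : ∀ x, 0 ≤ f x) (hf1 : ∫ x, f x ∂μ = 1)
    (hα : Measurable α) (hα0 : ∀ x, 0 ≤ α x) (hα1 : ∀ x, α x ≤ 1) :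
    ∫⁻ x, ENNReal.ofReal (1 - α x) ∂μ.withDensity (fun x => ENNReal.ofReal (f x)) =
      ENNReal.ofReal (1 - ∫ x, α x * f x ∂μ) := by
  have hαf : Integrable (fun x => α x * f x) μ :=
    hf.bdd_mul hα.aestronglyMeasurable (ae_of_all _ fun x => by
      rw [Real.norm_eq_abs, abs_of_nonneg (hα0 x)]; exact hα1 x)
  have hrest : Integrable (fun x => (1 - α x) * f x) μ :=
    (hf.sub hαf).congr (ae_of_all _ fun x => by simp only [Pi.sub_apply]; ring)
  rw [lintegral_withDensity_eq_lintegral_mul₀ hf.aemeasurable.ennreal_ofReal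
      (hα.const_sub 1).ennreal_ofReal.aemeasurable]
  simp_rw [Pi.mul_apply, ← ENNReal.ofReal_mul (hf0 _), mul_comm (f _)]
  rw [← ofReal_integral_eq_lintegral_ofReal hrest
      (ae_of_all _ fun x => mul_nonneg (sub_nonneg.2 (hα1 x)) (hf0 x))]
  simp_rw [sub_mul, one_mul]
  rw [integral_sub hf hαf, hf1]

section MetropolisHastings

variable {d : ℕ} {γ : (Fin d → ℝ) → ℝ} {q : (Fin d → ℝ) → (Fin d → ℝ) → ℝ}

lemma measurable_mhAccept (hγ : Measurable γ) (hq : Measurable (Function.uncurry q))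
    (u : Fin d → ℝ) : Measurable (mhAccept γ q u) :=
  measurable_const.min ((hγ.mul hq.of_uncurry_right).div
    (measurable_const.mul hq.of_uncurry_left))

lemma mhAccept_nonneg (hγ : ∀ w, 0 ≤ γ w) (hq : ∀ u w, 0 ≤ q u w) (u w : Fin d → ℝ) :
    0 ≤ mhAccept γ q u w :=
  le_min zero_le_one <| div_nonneg (mul_nonneg (hγ w) (hq w u)) (mul_nonneg (hγ u) (hq u w))

lemma mhAccept_le_one (u w : Fin d → ℝ) : mhAccept γ q u w ≤ 1 :=
  min_le_left _ _

theorem map_acceptOrStay_mhAccept_prod_uniform (hγm : Measurable γ) (hγ : ∀ w, 0 ≤ γ w)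
    (hqm : Measurable (Function.uncurry q)) (hq : ∀ u w, 0 ≤ q u w) {u : Fin d → ℝ}
    (hqint : ∫ w, q u w = 1) :
    ((volume.withDensity fun w => ENNReal.ofReal (q u w)).prod
        (volume.restrict (Icc (0 : ℝ) 1))).map (acceptOrStay (mhAccept γ q u) u) =
      mhKernel γ q u := by
  have hα := measurable_mhAccept hγm hqm u
  have hα0 := mhAccept_nonneg hγ hq u
  have hα1 := mhAccept_le_one (γ := γ) (q := q) u
  rw [map_acceptOrStay_prod_uniform _ hα hα0 hα1,
    lintegral_ofReal_one_sub_withDensity (integrable_of_integral_eq_one hqint) (hq u) hqint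
      hα hα0 hα1,
    ← withDensity_mul _ hqm.of_uncurry_left.ennreal_ofReal hα.ennreal_ofReal, mhKernel]
  congr 2
  funext w
  rw [Pi.mul_apply, ← ENNReal.ofReal_mul (hq u w), mul_comm]

end MetropolisHastings

section SharedNoise

variable {X Y Z W R : Type*} [MeasurableSpace X] [MeasurableSpace Y] [MeasurableSpace Z]
  [MeasurableSpace W] [MeasurableSpace R] {g₁ : X × R → Z} {g₂ : Y × R → W}

lemma map_fst_map_prod_shared (ν : Measure (X × Y)) (ρ : Measure R) [SFinite ν] [SFinite ρ]
    (hg₁ : Measurable g₁) (hg₂ : Measurable g₂) :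
    ((ν.prod ρ).map fun p => (g₁ (p.1.1, p.2), g₂ (p.1.2, p.2))).map Prod.fst =
      ((ν.map Prod.fst).prod ρ).map g₁ := by
  rw [Measure.map_map measurable_fst (by fun_prop)]
  conv_rhs => rw [← Measure.map_id (μ := ρ),
    Measure.map_prod_map _ _ measurable_fst measurable_id,
    Measure.map_map hg₁ (measurable_fst.prodMap measurable_id)]
  rfl

lemma map_snd_map_prod_shared (ν : Measure (X × Y)) (ρ : Measure R) [SFinite ν] [SFinite ρ]
    (hg₁ : Measurable g₁) (hg₂ : Measurable g₂) :
    ((ν.prod ρ).map fun p => (g₁ (p.1.1, p.2), g₂ (p.1.2, p.2))).map Prod.snd =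
      ((ν.map Prod.snd).prod ρ).map g₂ := by
  rw [Measure.map_map measurable_snd (by fun_prop)]
  conv_rhs => rw [← Measure.map_id (μ := ρ),
    Measure.map_prod_map _ _ measurable_snd measurable_id,
    Measure.map_map hg₂ (measurable_snd.prodMap measurable_id)]
  rfl

end SharedNoise

/-- Coupled Metropolis–Hastings: given any coupling `ν` of the two proposal
distributions `q(u, ·)` and `q'(u', ·)` and a single shared uniform random variable
on `[0,1]` used for the two accept/reject decisions, the resulting pair of states is a
coupling of the two Metropolis–Hastings kernels `K(u, ·)` and `K'(u', ·)`. -/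
theorem coupled_metropolis_hastings_marginals {d : ℕ}
    (γ γ' : (Fin d → ℝ) → ℝ) (hγm : Measurable γ) (hγ'm : Measurable γ')
    (hγpos : ∀ w, 0 < γ w) (hγ'pos : ∀ w, 0 < γ' w)
    (q q' : (Fin d → ℝ) → (Fin d → ℝ) → ℝ)
    (hqm : Measurable (Function.uncurry q)) (hq'm : Measurable (Function.uncurry q'))
    (hqpos : ∀ u w, 0 < q u w) (hq'pos : ∀ u w, 0 < q' u w)
    (hqint : ∀ u, ∫ w, q u w = 1) (hq'int : ∀ u, ∫ w, q' u w = 1)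
    (u u' : Fin d → ℝ)
    (ν : Measure ((Fin d → ℝ) × (Fin d → ℝ))) [IsProbabilityMeasure ν]
    (hν1 : ν.map Prod.fst = volume.withDensity fun w => ENNReal.ofReal (q u w))
    (hν2 : ν.map Prod.snd = volume.withDensity fun w => ENNReal.ofReal (q' u' w))
    (T : ((Fin d → ℝ) × (Fin d → ℝ)) × ℝ → (Fin d → ℝ) × (Fin d → ℝ))
    (hT : ∀ w w' v, T ((w, w'), v) =
      ((if v < mhAccept γ q u w then w else u),
       (if v < mhAccept γ' q' u' w' then w' else u'))) :
    ((ν.prod (volume.restrict (Set.Icc (0:ℝ) 1))).map T).map Prod.fst = mhKernel γ q u ∧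
      ((ν.prod (volume.restrict (Set.Icc (0:ℝ) 1))).map T).map Prod.snd
        = mhKernel γ' q' u' := by
  obtain rfl : T = fun p => (acceptOrStay (mhAccept γ q u) u (p.1.1, p.2),
      acceptOrStay (mhAccept γ' q' u') u' (p.1.2, p.2)) :=
    funext fun ⟨⟨w, w'⟩, v⟩ => hT w w' v
  have hg := measurable_acceptOrStay (measurable_mhAccept hγm hqm u) u
  have hg' := measurable_acceptOrStay (measurable_mhAccept hγ'm hq'm u') u'
  constructor
  · rw [map_fst_map_prod_shared _ _ hg hg', hν1]
    exact map_acceptOrStay_mhAccept_prod_uniform hγm (fun w => (hγpos w).le) hqm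
      (fun u w => (hqpos u w).le) (hqint u)
  · rw [map_snd_map_prod_shared _ _ hg hg', hν2]
    exact map_acceptOrStay_mhAccept_prod_uniform hγ'm (fun w => (hγ'pos w).le) hq'm
      (fun u w => (hq'pos u w).le) (hq'int u')
end
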